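/- arXiv:1603.03191 — 2 statements merged into one kernel-verified Lean document; each statement's English description precedes it below -/
import Mathlib

section
/- Fix a prime p. Let 0 < λ_0 < λ_1 < … < λ_{n−1} < pλ_0 and a_0, …, a_{n−1} ∈ H_p. Then there exists f ∈ K(C_p) with Ord_{λ_j}(f) = a_j·λ_j for each j and Ord_λ(f) = 0 for every λ ∈ [λ_0, pλ_0) not equal to any λ_j, if and only if Σ_j a_j·λ_j = 0 and Σ_j χ(a_j) = 0 in ℤ/(p−1)ℤ. Moreover, for every d ∈ ℝ and every m ∈ ℤ/(p−1)ℤ there exist such data (λ_j), (a_j) with Σ_j a_j·λ_j = d and Σ_j χ(a_j) = m. (Equivalently, the pair (deg, χ) induces a group isomorphism Div(C_p)/P ≅ ℝ × ℤ/(p−1)ℤ, where P is the subgroup of principal divisors.) -/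
/-!
Let `f ∈ K(C_p)` be affine with slope `s_i` and intercept `c_i` on the pieces of a partition
`λ₀ = t₀ < ⋯ < t_{N+1} = pλ₀`. Its slope jumps are `s_{i+1} - s_i` at `t_{i+1}` and, by the
periodicity `f(pλ) = f(λ)`, `s₀ - p s_N` at `t₀`. Continuity turns `t_{i+1}(s_{i+1} - s_i)` into
`c_i - c_{i+1}` (and `t₀(s₀ - p s_N)` into `c_N - c₀`), so the degree `Σ ord` telescopes to `0`;
since `χ(p s) = χ(s)`, so does `Σ χ(jump)`. Points of `[λ₀, pλ₀)` off the partition lie inside an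
affine piece and have order `0`, so these are the sums over the `λ_j`.

Conversely, `Σ χ(a_j) = 0` means `Σ a_j = (p - 1)σ` with `σ ∈ H_p`. The broken line
`g(x) = -pσ(x - λ₀) + Σ a_j max(0, x - λ_j)` has slopes in `H_p` and the prescribed jumps, and
`Σ a_j λ_j = 0` gives `g(λ₀) = g(pλ₀)`; its extension by `f(p^k x) = g(x)` lies in `K(C_p)`.
-/

/-- The set `H_p = ℤ[1/p] = {a / p^n : a ∈ ℤ, n ∈ ℕ}` inside `ℝ`. -/
def HpSet (p : ℕ) : Set ℝ := {x : ℝ | ∃ (a : ℤ) (n : ℕ), x = (a : ℝ) / (p : ℝ) ^ n}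

/-- `f` is piecewise affine on `(0,∞)` with all slopes in `S`. -/
def PiecewiseAffineWith (S : Set ℝ) (f : ℝ → ℝ) : Prop :=
  ∀ u v : ℝ, 0 < u → u < v →
    ∃ (n : ℕ) (t : ℕ → ℝ), 0 < n ∧ t 0 = u ∧ t n = v ∧ (∀ i < n, t i < t (i + 1)) ∧
      ∀ i < n, ∃ s ∈ S, ∃ c : ℝ, ∀ x ∈ Set.Icc (t i) (t (i + 1)), f x = s * x + c

/-- `K(C_p)`: continuous piecewise affine functions on `(0,∞)` with slopes in `H_p` satisfying
`f(pλ) = f(λ)`. -/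
def KCp (p : ℕ) (f : ℝ → ℝ) : Prop :=
  ContinuousOn f (Set.Ioi 0) ∧ PiecewiseAffineWith (HpSet p) f ∧
    ∀ lam : ℝ, 0 < lam → f (p * lam) = f lam

/-- `f` has right-hand slope `s` at `x`. -/
def HasRightSlope (f : ℝ → ℝ) (x s : ℝ) : Prop :=
  ∃ δ : ℝ, 0 < δ ∧ ∀ y ∈ Set.Ico x (x + δ), f y = f x + s * (y - x)

/-- `f` has left-hand slope `s` at `x`. -/
def HasLeftSlope (f : ℝ → ℝ) (x s : ℝ) : Prop :=
  ∃ δ : ℝ, 0 < δ ∧ ∀ y ∈ Set.Ioc (x - δ) x, f y = f x + s * (y - x)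

/-- The order of `f` at `λ` is `d = λ (f'₊(λ) − f'₋(λ))`. -/
def HasOrdAt (f : ℝ → ℝ) (lam d : ℝ) : Prop :=
  ∃ sp sm : ℝ, HasRightSlope f lam sp ∧ HasLeftSlope f lam sm ∧ d = lam * (sp - sm)

open Set

section HpSet

variable {p : ℕ}

lemma intCast_mem_hpSet (a : ℤ) : (a : ℝ) ∈ HpSet p := ⟨a, 0, by simp⟩

def hpAddSubgroup (hp : p ≠ 0) : AddSubgroup ℝ where
  carrier := HpSet p
  zero_mem' := by simpa using intCast_mem_hpSet (p := p) 0
  add_mem' := by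
    rintro _ _ ⟨a, m, rfl⟩ ⟨b, n, rfl⟩
    refine ⟨a * p ^ n + b * p ^ m, m + n, ?_⟩
    have : (p : ℝ) ≠ 0 := by exact_mod_cast hp
    push_cast
    field_simp
    ring
  neg_mem' := by
    rintro _ ⟨a, m, rfl⟩
    exact ⟨-a, m, by push_cast; ring⟩

lemma natCast_mul_mem_hpSet {x : ℝ} (hx : x ∈ HpSet p) : (p : ℝ) * x ∈ HpSet p := by
  obtain ⟨a, m, rfl⟩ := hx
  exact ⟨a * p, m, by push_cast; ring⟩

lemma div_zpow_mem_hpSet {x : ℝ} (hx : x ∈ HpSet p) (k : ℤ) :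
    x / (p : ℝ) ^ k ∈ HpSet p := by
  obtain ⟨a, m, rfl⟩ := hx
  rcases Int.eq_nat_or_neg k with ⟨k, rfl | rfl⟩
  · exact ⟨a, m + k, by rw [zpow_natCast, pow_add, div_div]⟩
  · refine ⟨a * p ^ k, m, ?_⟩
    push_cast
    rw [zpow_neg, zpow_natCast, div_inv_eq_mul]
    ring

lemma natCast_eq_one_zmod_pred (hp : p ≠ 0) : ((p : ℕ) : ZMod (p - 1)) = 1 := by
  have h : ((p : ℕ) : ZMod (p - 1)) = ((p - 1 + 1 : ℕ) : ZMod (p - 1)) :=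
    congrArg _ (Nat.sub_add_cancel (Nat.one_le_iff_ne_zero.2 hp)).symm
  rw [h, Nat.cast_add, ZMod.natCast_self, zero_add, Nat.cast_one]

end HpSet

section Chi

def IsChi (p : ℕ) (χ : ℝ → ZMod (p - 1)) : Prop :=
  ∀ (a : ℤ) (m : ℕ), χ ((a : ℝ) / (p : ℝ) ^ m) = (a : ZMod (p - 1))

variable {p : ℕ} {χ : ℝ → ZMod (p - 1)}

lemma chi_intCast (hχ : IsChi p χ) (a : ℤ) : χ a = a := by
  simpa using hχ a 0

lemma chi_zero (hχ : IsChi p χ) : χ 0 = 0 := by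
  simpa using chi_intCast hχ 0

lemma chi_add (hχ : IsChi p χ) (hp : p ≠ 0) {x y : ℝ} (hx : x ∈ HpSet p)
    (hy : y ∈ HpSet p) : χ (x + y) = χ x + χ y := by
  obtain ⟨a, m, rfl⟩ := hx
  obtain ⟨b, n, rfl⟩ := hy
  have hp' : (p : ℝ) ≠ 0 := by exact_mod_cast hp
  have : (a : ℝ) / p ^ m + b / p ^ n = ((a * p ^ n + b * p ^ m : ℤ) : ℝ) / p ^ (m + n) := by
    push_cast
    field_simp
    ring
  rw [this, hχ, hχ, hχ]
  push_cast
  simp [natCast_eq_one_zmod_pred hp]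

lemma chi_sub (hχ : IsChi p χ) (hp : p ≠ 0) {x y : ℝ} (hx : x ∈ HpSet p)
    (hy : y ∈ HpSet p) : χ (x - y) = χ x - χ y := by
  rw [eq_sub_iff_add_eq, ← chi_add hχ hp ((hpAddSubgroup hp).sub_mem hx hy) hy, sub_add_cancel]

lemma chi_natCast_mul (hχ : IsChi p χ) (hp : p ≠ 0) {x : ℝ} (hx : x ∈ HpSet p) :
    χ (p * x) = χ x := by
  obtain ⟨a, m, rfl⟩ := hx
  rw [show (p : ℝ) * (a / p ^ m) = ((a * p : ℤ) : ℝ) / p ^ m by push_cast; ring, hχ, hχ]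
  push_cast
  rw [natCast_eq_one_zmod_pred hp, mul_one]

lemma chi_sum (hχ : IsChi p χ) (hp : p ≠ 0) {n : ℕ} {a : ℕ → ℝ} (ha : ∀ j < n, a j ∈ HpSet p) :
    χ (∑ j ∈ Finset.range n, a j) = ∑ j ∈ Finset.range n, χ (a j) := by
  induction n with
  | zero => simpa using chi_zero hχ
  | succ n ih =>
    have ha' : ∀ j < n, a j ∈ HpSet p := fun j hj => ha j (by omega)
    rw [Finset.sum_range_succ, Finset.sum_range_succ, chi_add hχ hp ((hpAddSubgroup hp).sum_mem
      fun j hj => ha' j (Finset.mem_range.1 hj)) (ha n n.lt_succ_self), ih ha']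

lemma exists_eq_pred_mul_of_chi_eq_zero (hχ : IsChi p χ) (hp : p ≠ 0) {x : ℝ}
    (hx : x ∈ HpSet p) (h : χ x = 0) :
    ∃ σ ∈ HpSet p, x = ((p : ℝ) - 1) * σ := by
  obtain ⟨b, m, rfl⟩ := hx
  rw [hχ, ZMod.intCast_zmod_eq_zero_iff_dvd] at h
  obtain ⟨c, rfl⟩ := h
  refine ⟨c / p ^ m, ⟨c, m, rfl⟩, ?_⟩
  push_cast [Nat.cast_sub (Nat.one_le_iff_ne_zero.2 hp)]
  ring

end Chi

def IsAffineOn (f : ℝ → ℝ) (s a b : ℝ) : Prop :=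
  ∃ c : ℝ, ∀ x ∈ Icc a b, f x = s * x + c

noncomputable def jump (f : ℝ → ℝ) (x : ℝ) : ℝ :=
  derivWithin f (Ici x) x - derivWithin f (Iic x) x

section Slopes

variable {f : ℝ → ℝ} {s a b x : ℝ}

lemma IsAffineOn.mono {a' b' : ℝ} (h : IsAffineOn f s a b) (ha : a ≤ a') (hb : b' ≤ b) :
    IsAffineOn f s a' b' :=
  let ⟨c, hc⟩ := h
  ⟨c, fun y hy => hc y ⟨ha.trans hy.1, hy.2.trans hb⟩⟩

lemma IsAffineOn.congr {g : ℝ → ℝ} (h : IsAffineOn g s a b) (hfg : EqOn f g (Icc a b)) :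
    IsAffineOn f s a b :=
  let ⟨c, hc⟩ := h
  ⟨c, fun y hy => (hfg hy).trans (hc y hy)⟩

lemma IsAffineOn.continuousOn (h : IsAffineOn f s a b) : ContinuousOn f (Icc a b) := by
  obtain ⟨c, hc⟩ := h
  exact (continuous_const.mul continuous_id |>.add continuous_const).continuousOn.congr hc

lemma IsAffineOn.hasRightSlope (h : IsAffineOn f s a b) (hx : x ∈ Ico a b) :
    HasRightSlope f x s := by
  obtain ⟨c, hc⟩ := h
  refine ⟨b - x, by linarith [hx.2], fun y hy => ?_⟩
  rw [hc y ⟨hx.1.trans hy.1, by linarith [hy.2]⟩, hc x (Ico_subset_Icc_self hx)]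
  ring

lemma IsAffineOn.hasLeftSlope (h : IsAffineOn f s a b) (hx : x ∈ Ioc a b) :
    HasLeftSlope f x s := by
  obtain ⟨c, hc⟩ := h
  refine ⟨x - a, by linarith [hx.1], fun y hy => ?_⟩
  rw [hc y ⟨by linarith [hy.1], hy.2.trans hx.2⟩, hc x (Ioc_subset_Icc_self hx)]
  ring

lemma HasLeftSlope.of_mul_periodic {P : ℝ} (hP : 0 < P) (hper : ∀ y, 0 < y → f (P * y) = f y)
    (hx : 0 < x) (h : HasLeftSlope f (P * x) s) : HasLeftSlope f x (P * s) := by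
  obtain ⟨δ, hδ, h⟩ := h
  refine ⟨min (δ / P) x, lt_min (div_pos hδ hP) hx, fun y hy => ?_⟩
  have hy0 : 0 < y := by linarith [hy.1, min_le_right (δ / P) x]
  have hyδ : P * x - δ < P * y := by
    have := (lt_div_iff₀' hP).1 (by linarith [hy.1, min_le_left (δ / P) x] : x - y < δ / P)
    linarith
  rw [← hper y hy0, h (P * y) ⟨hyδ, by nlinarith [hy.2]⟩, hper x hx]
  ring

lemma HasRightSlope.derivWithin_eq (h : HasRightSlope f x s) :
    derivWithin f (Ici x) x = s := by
  obtain ⟨δ, hδ, h⟩ := h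
  have : HasDerivWithinAt f s (Ici x) x := by
    refine ((hasDerivAt_id x).sub_const x |>.const_mul s |>.const_add (f x)
      |>.hasDerivWithinAt).congr_of_eventuallyEq ?_ (by simp) |>.congr_deriv (by simp)
    filter_upwards [Ico_mem_nhdsGE (by linarith : x < x + δ)] with y hy using h y hy
  exact this.derivWithin (uniqueDiffWithinAt_Ici x)

lemma HasLeftSlope.derivWithin_eq (h : HasLeftSlope f x s) :
    derivWithin f (Iic x) x = s := by
  obtain ⟨δ, hδ, h⟩ := h
  have : HasDerivWithinAt f s (Iic x) x := by
    refine ((hasDerivAt_id x).sub_const x |>.const_mul s |>.const_add (f x)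
      |>.hasDerivWithinAt).congr_of_eventuallyEq ?_ (by simp) |>.congr_deriv (by simp)
    filter_upwards [Ioc_mem_nhdsLE (by linarith : x - δ < x)] with y hy using h y hy
  exact this.derivWithin (uniqueDiffWithinAt_Iic x)

lemma HasOrdAt.jump_eq {d : ℝ} (h : HasOrdAt f x d) (hx : x ≠ 0) : jump f x = d / x := by
  obtain ⟨sr, sl, hr, hl, rfl⟩ := h
  rw [jump, hr.derivWithin_eq, hl.derivWithin_eq]
  field_simp

end Slopes

lemma exists_mem_Ico_of_le_of_lt {α : Type*} [LinearOrder α] {t : ℕ → α} {x : α} :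
    ∀ {N : ℕ}, t 0 ≤ x → x < t N → ∃ i < N, x ∈ Ico (t i) (t (i + 1))
  | 0, h0, hN => absurd hN (not_lt.2 h0)
  | N + 1, h0, hN => by
    by_cases hx : t N ≤ x
    · exact ⟨N, N.lt_succ_self, hx, hN⟩
    · obtain ⟨i, hi, hxi⟩ := exists_mem_Ico_of_le_of_lt h0 (not_le.1 hx)
      exact ⟨i, hi.trans N.lt_succ_self, hxi⟩

lemma Finset.sum_range_succ_eq_zero_of_cyclic {M : Type*} [AddCommGroup M] {D G : ℕ → M} {N : ℕ}
    (h0 : D 0 = G 0 - G N) (hsucc : ∀ i < N, D (i + 1) = G (i + 1) - G i) :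
    ∑ i ∈ Finset.range (N + 1), D i = 0 := by
  rw [Finset.sum_range_succ', Finset.sum_congr rfl fun i hi => hsucc i (Finset.mem_range.1 hi),
    Finset.sum_range_sub, h0]
  abel

lemma sum_range_comp_eq_of_eq_zero {M : Type*} [AddCommMonoid M] {w : ℝ → M} {n N : ℕ}
    {u v : ℕ → ℝ} (hu : InjOn u (Iio n)) (hv : InjOn v (Iio N))
    (hu0 : ∀ j < n, (∀ i < N, v i ≠ u j) → w (u j) = 0)
    (hv0 : ∀ i < N, (∀ j < n, u j ≠ v i) → w (v i) = 0) :
    ∑ j ∈ Finset.range n, w (u j) = ∑ i ∈ Finset.range N, w (v i) := by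
  classical
  rw [← Finset.sum_image (f := w) (g := u) (by simpa using hu),
    ← Finset.sum_image (f := w) (g := v) (by simpa using hv)]
  refine Finset.sum_congr_of_eq_on_inter ?_ ?_ fun _ _ _ => rfl
  · simp only [Finset.mem_image, Finset.mem_range, not_exists, not_and]
    rintro _ ⟨j, hj, rfl⟩ hne
    exact hu0 j hj hne
  · simp only [Finset.mem_image, Finset.mem_range, not_exists, not_and]
    rintro _ ⟨i, hi, rfl⟩ hne
    exact hv0 i hi hne

lemma exists_partition_of_finset {E : Finset ℝ} {u v : ℝ} (huv : u < v) (hu : u ∈ E) (hv : v ∈ E)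
    (hE : ∀ z ∈ E, z ∈ Icc u v) :
    ∃ N : ℕ, ∃ t : ℕ → ℝ, 0 < N ∧ t 0 = u ∧ t N = v ∧ (∀ i < N, t i < t (i + 1)) ∧
      (∀ i ≤ N, t i ∈ E) ∧ ∀ i < N, ∀ z ∈ E, z ∉ Ioo (t i) (t (i + 1)) := by
  have hk : 1 < E.card := Finset.one_lt_card.2 ⟨u, hu, v, hv, huv.ne⟩
  set e := E.orderEmbOfFin rfl
  set t : ℕ → ℝ := fun i => if h : i < E.card then e ⟨i, h⟩ else v
  have ht : ∀ i (hi : i < E.card), t i = e ⟨i, hi⟩ := fun i hi => dif_pos hi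
  refine ⟨E.card - 1, t, by omega, ?_, ?_, fun i hi => ?_, fun i hi => ?_, fun i hi z hz hzi => ?_⟩
  · rw [ht 0 (by omega), Finset.orderEmbOfFin_zero rfl (by omega)]
    exact le_antisymm (E.min'_le u hu) (hE _ (E.min'_mem _)).1
  · rw [ht _ (by omega), Finset.orderEmbOfFin_last rfl (by omega)]
    exact le_antisymm (hE _ (E.max'_mem _)).2 (E.le_max' v hv)
  · rw [ht i (by omega), ht (i + 1) (by omega)]
    exact e.strictMono (Fin.mk_lt_mk.2 i.lt_succ_self)
  · rw [ht i (by omega)]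
    exact E.orderEmbOfFin_mem rfl _
  · obtain ⟨j, rfl⟩ : z ∈ Set.range e := by rw [Finset.range_orderEmbOfFin]; exact hz
    obtain ⟨h1, h2⟩ := hzi
    rw [ht i (by omega), e.lt_iff_lt, Fin.lt_def] at h1
    rw [ht (i + 1) (by omega), e.lt_iff_lt, Fin.lt_def] at h2
    exact absurd h2 (by simp only at h1 ⊢; omega)

lemma piecewiseAffineWith_of_forall_exists {S : Set ℝ} {f : ℝ → ℝ}
    (h : ∀ u v, 0 < u → u < v → ∃ E : Finset ℝ,
      ∀ z ∈ Ioo u v, ∃ a ∈ E, ∃ b ∈ E, z ∈ Ico a b ∧ ∃ s ∈ S, IsAffineOn f s a b) :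
    PiecewiseAffineWith S f := by
  classical
  intro u v hu huv
  obtain ⟨E, hE⟩ := h u v hu huv
  set E' := insert u (insert v (E.filter (· ∈ Ioo u v)))
  have hE' : ∀ z ∈ E', z ∈ Icc u v := by
    intro z hz
    simp only [E', Finset.mem_insert, Finset.mem_filter] at hz
    rcases hz with rfl | rfl | ⟨-, hz⟩
    exacts [⟨le_rfl, huv.le⟩, ⟨huv.le, le_rfl⟩, Ioo_subset_Icc_self hz]
  have hmem : ∀ z ∈ E, z ∈ Ioo u v → z ∈ E' := fun z hz hzuv =>
    Finset.mem_insert_of_mem (Finset.mem_insert_of_mem (Finset.mem_filter.2 ⟨hz, hzuv⟩))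
  obtain ⟨N, t, hN, ht0, htN, hmono, htE, hgap⟩ :=
    exists_partition_of_finset huv (by simp [E']) (by simp [E']) hE'
  refine ⟨N, t, hN, ht0, htN, hmono, fun i hi => ?_⟩
  have hti := hE' _ (htE i hi.le)
  have hti' := hE' _ (htE (i + 1) hi)
  have hlt := hmono i hi
  obtain ⟨a, ha, b, hb, ⟨haz, hzb⟩, s, hs, haff⟩ :=
    hE ((t i + t (i + 1)) / 2) ⟨by linarith [hti.1], by linarith [hti'.2]⟩
  -- `a, b ∈ E` cannot fall strictly between the consecutive points `t i` and `t (i + 1)`.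
  refine ⟨s, hs, haff.mono (not_lt.1 fun hta => ?_) (not_lt.1 fun htb => ?_)⟩
  · exact hgap i hi a (hmem a ha ⟨by linarith [hti.1], by linarith [hti'.2]⟩) ⟨hta, by linarith⟩
  · exact hgap i hi b (hmem b hb ⟨by linarith [hti.1], by linarith [hti'.2]⟩) ⟨by linarith, htb⟩

lemma PiecewiseAffineWith.continuousOn {S : Set ℝ} {f : ℝ → ℝ} (h : PiecewiseAffineWith S f) :
    ContinuousOn f (Ioi 0) := by
  intro x hx
  have hx : 0 < x := hx
  obtain ⟨N, t, -, ht0, htN, hmono, hpieces⟩ := h (x / 2) (x + 1) (by positivity) (by linarith)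
  have hupto : ∀ m ≤ N, t 0 ≤ t m ∧ ContinuousOn f (Icc (t 0) (t m)) := by
    intro m
    induction m with
    | zero => simp
    | succ m ih =>
      intro hm
      obtain ⟨h0m, hcont⟩ := ih (by omega)
      obtain ⟨s, -, haff⟩ := hpieces m (by omega)
      have hm' := (hmono m (by omega)).le
      refine ⟨h0m.trans hm', ?_⟩
      rw [← Icc_union_Icc_eq_Icc h0m hm']
      exact hcont.union_of_isClosed (IsAffineOn.continuousOn haff) isClosed_Icc isClosed_Icc
  have hcont := (hupto N le_rfl).2
  rw [ht0, htN] at hcont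
  exact (hcont.continuousAt (Icc_mem_nhds (by linarith) (by linarith))).continuousWithinAt

structure IsPeriodPartition (f : ℝ → ℝ) (P : ℝ) (N : ℕ) (t s : ℕ → ℝ) : Prop where
  pos : 0 < t 0
  last : t (N + 1) = P * t 0
  lt_succ : ∀ i ≤ N, t i < t (i + 1)
  affine : ∀ i ≤ N, IsAffineOn f (s i) (t i) (t (i + 1))

namespace IsPeriodPartition

variable {f : ℝ → ℝ} {P : ℝ} {N : ℕ} {t s : ℕ → ℝ}

lemma strictMonoOn (h : IsPeriodPartition f P N t s) : StrictMonoOn t (Iic (N + 1)) :=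
  strictMonoOn_Iic_of_lt_succ fun i hi => by
    simpa [Order.succ_eq_add_one] using h.lt_succ i (Nat.lt_succ_iff.1 hi)

lemma pos_of_le (h : IsPeriodPartition f P N t s) {i : ℕ} (hi : i ≤ N + 1) : 0 < t i :=
  h.pos.trans_le (h.strictMonoOn.monotoneOn (by simp) hi (Nat.zero_le i))

lemma mem_Icc (h : IsPeriodPartition f P N t s) {i : ℕ} (hi : i ≤ N + 1) :
    t i ∈ Icc (t 0) (P * t 0) :=
  h.last ▸ ⟨h.strictMonoOn.monotoneOn (by simp) hi (Nat.zero_le i),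
    h.strictMonoOn.monotoneOn hi (by simp) hi⟩

lemma congr {g : ℝ → ℝ} (h : IsPeriodPartition g P N t s)
    (hfg : EqOn f g (Icc (t 0) (P * t 0))) : IsPeriodPartition f P N t s :=
  ⟨h.pos, h.last, h.lt_succ, fun i hi => (h.affine i hi).congr fun x hx =>
    hfg ⟨(h.mem_Icc (by omega)).1.trans hx.1, hx.2.trans (h.mem_Icc (by omega)).2⟩⟩

lemma hasOrdAt_of_mem_Ioo (h : IsPeriodPartition f P N t s) {i : ℕ} (hi : i ≤ N) {x : ℝ}
    (hx : x ∈ Ioo (t i) (t (i + 1))) : HasOrdAt f x 0 :=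
  ⟨s i, s i, (h.affine i hi).hasRightSlope (Ioo_subset_Ico_self hx),
    (h.affine i hi).hasLeftSlope (Ioo_subset_Ioc_self hx), by ring⟩

lemma hasOrdAt_of_ne (h : IsPeriodPartition f P N t s) {x : ℝ} (hx : x ∈ Ico (t 0) (t (N + 1)))
    (hne : ∀ i ≤ N, x ≠ t i) : HasOrdAt f x 0 := by
  obtain ⟨i, hi, hxi, hxi'⟩ := exists_mem_Ico_of_le_of_lt hx.1 hx.2
  exact h.hasOrdAt_of_mem_Ioo (Nat.lt_succ_iff.1 hi)
    ⟨hxi.lt_of_ne (hne i (Nat.lt_succ_iff.1 hi)).symm, hxi'⟩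

lemma hasOrdAt_succ (h : IsPeriodPartition f P N t s) {i : ℕ} (hi : i < N) :
    HasOrdAt f (t (i + 1)) (t (i + 1) * (s (i + 1) - s i)) :=
  ⟨s (i + 1), s i, (h.affine (i + 1) hi).hasRightSlope ⟨le_rfl, h.lt_succ (i + 1) hi⟩,
    (h.affine i hi.le).hasLeftSlope ⟨h.lt_succ i hi.le, le_rfl⟩, rfl⟩

lemma hasOrdAt_zero (h : IsPeriodPartition f P N t s) (hP : 0 < P)
    (hper : ∀ y, 0 < y → f (P * y) = f y) : HasOrdAt f (t 0) (t 0 * (s 0 - P * s N)) := by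
  have hleft : HasLeftSlope f (P * t 0) (s N) :=
    h.last ▸ (h.affine N le_rfl).hasLeftSlope ⟨h.lt_succ N le_rfl, le_rfl⟩
  exact ⟨s 0, P * s N, (h.affine 0 (Nat.zero_le N)).hasRightSlope
    ⟨le_rfl, h.lt_succ 0 (Nat.zero_le N)⟩, hleft.of_mul_periodic hP hper h.pos, rfl⟩

lemma jump_zero (h : IsPeriodPartition f P N t s) (hP : 0 < P)
    (hper : ∀ y, 0 < y → f (P * y) = f y) : jump f (t 0) = s 0 - P * s N := by
  rw [(h.hasOrdAt_zero hP hper).jump_eq h.pos.ne', mul_div_cancel_left₀ _ h.pos.ne']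

lemma jump_succ (h : IsPeriodPartition f P N t s) {i : ℕ} (hi : i < N) :
    jump f (t (i + 1)) = s (i + 1) - s i := by
  rw [(h.hasOrdAt_succ hi).jump_eq (h.pos_of_le (by omega)).ne',
    mul_div_cancel_left₀ _ (h.pos_of_le (by omega)).ne']

lemma sum_mul_jump_eq_zero (h : IsPeriodPartition f P N t s) (hP : 0 < P)
    (hper : ∀ y, 0 < y → f (P * y) = f y) :
    ∑ i ∈ Finset.range (N + 1), t i * jump f (t i) = 0 := by
  choose! c hc using h.affine
  -- `f` is continuous at the breakpoints, so `t (i + 1) * (s (i + 1) - s i) = c i - c (i + 1)`: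
  -- the sum telescopes in the intercepts.
  refine Finset.sum_range_succ_eq_zero_of_cyclic (G := fun i => -c i) ?_ fun i hi => ?_
  · have h0 := hc 0 (Nat.zero_le N) (t 0) ⟨le_rfl, (h.lt_succ 0 (Nat.zero_le N)).le⟩
    have hN := hc N le_rfl (t (N + 1)) ⟨(h.lt_succ N le_rfl).le, le_rfl⟩
    rw [h.last, hper _ h.pos] at hN
    rw [h.jump_zero hP hper]
    linear_combination hN - h0
  · have hl := hc i hi.le (t (i + 1)) ⟨(h.lt_succ i hi.le).le, le_rfl⟩
    have hr := hc (i + 1) hi (t (i + 1)) ⟨le_rfl, (h.lt_succ (i + 1) hi).le⟩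
    rw [h.jump_succ hi]
    linear_combination hl - hr

lemma sum_chi_jump_eq_zero {p : ℕ} {χ : ℝ → ZMod (p - 1)} (hχ : IsChi p χ) (hp : p ≠ 0)
    (h : IsPeriodPartition f p N t s)
    (hs : ∀ i ≤ N, s i ∈ HpSet p) (hper : ∀ y, 0 < y → f (p * y) = f y) :
    ∑ i ∈ Finset.range (N + 1), χ (jump f (t i)) = 0 := by
  refine Finset.sum_range_succ_eq_zero_of_cyclic (G := fun i => χ (s i)) ?_ fun i hi => ?_
  · rw [h.jump_zero (by exact_mod_cast Nat.pos_of_ne_zero hp) hper,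
      chi_sub hχ hp (hs 0 (Nat.zero_le N)) (natCast_mul_mem_hpSet (hs N le_rfl)),
      chi_natCast_mul hχ hp (hs N le_rfl)]
  · rw [h.jump_succ hi, chi_sub hχ hp (hs (i + 1) hi) (hs i hi.le)]

lemma sum_range_comp_eq (h : IsPeriodPartition f P N t s) {A : Type*} [AddCommMonoid A]
    {w : ℝ → A} (hw : ∀ x, jump f x = 0 → w x = 0) {n : ℕ} {lam : ℕ → ℝ} (hlam : InjOn lam (Iio n))
    (hlam_mem : ∀ j < n, lam j ∈ Ico (t 0) (t (N + 1)))
    (hord0 : ∀ x ∈ Ico (t 0) (t (N + 1)), (∀ j < n, x ≠ lam j) → HasOrdAt f x 0) :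
    ∑ j ∈ Finset.range n, w (lam j) = ∑ i ∈ Finset.range (N + 1), w (t i) := by
  refine sum_range_comp_eq_of_eq_zero hlam
    (h.strictMonoOn.injOn.mono fun i hi => by simp at hi ⊢; omega) (fun j hj hne => ?_)
    fun i hi hne => ?_
  · have hpos : 0 < lam j := h.pos.trans_le (hlam_mem j hj).1
    refine hw _ ?_
    rw [(h.hasOrdAt_of_ne (hlam_mem j hj) fun i hi => (hne i (by omega)).symm).jump_eq hpos.ne',
      zero_div]
  · have hmem : t i ∈ Ico (t 0) (t (N + 1)) :=
      ⟨h.strictMonoOn.monotoneOn (by simp) (by simp; omega) (Nat.zero_le i),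
        h.strictMonoOn (by simp; omega) (by simp) hi⟩
    refine hw _ ?_
    rw [(hord0 _ hmem fun j hj => (hne j hj).symm).jump_eq (h.pos_of_le (by omega)).ne',
      zero_div]

lemma hasOrdAt_of_sub_eq {a : ℕ → ℝ} (h : IsPeriodPartition f P N t s) (hP : 0 < P)
    (hper : ∀ y, 0 < y → f (P * y) = f y) (ha0 : s 0 - P * s N = a 0)
    (ha : ∀ i < N, s (i + 1) - s i = a (i + 1)) {j : ℕ} (hj : j ≤ N) : HasOrdAt f (t j) (a j * t j) := by
  rcases j with _ | j
  · simpa [← ha0, mul_comm] using h.hasOrdAt_zero hP hper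
  · simpa [← ha j hj, mul_comm] using h.hasOrdAt_succ hj

end IsPeriodPartition

section PeriodicExtension

variable {P x₀ x : ℝ} {g : ℝ → ℝ}

noncomputable def periodicExtension (P x₀ : ℝ) (g : ℝ → ℝ) (x : ℝ) : ℝ :=
  g (x / P ^ ⌊Real.logb P (x / x₀)⌋)

lemma div_zpow_mem_Ico_iff (hP : 0 < P) (hx₀ : 0 < x₀) {k : ℤ} :
    x / P ^ k ∈ Ico x₀ (P * x₀) ↔ x / x₀ ∈ Ico (P ^ k) (P ^ (k + 1)) := by
  have hPk : 0 < P ^ k := zpow_pos hP k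
  simp only [mem_Ico, le_div_iff₀ hPk, div_lt_iff₀ hPk, le_div_iff₀ hx₀, div_lt_iff₀ hx₀,
    zpow_add_one₀ hP.ne']
  constructor <;> rintro ⟨h1, h2⟩ <;> exact ⟨by linarith, by linarith⟩

lemma floor_logb_div_eq (hP : 1 < P) (hx₀ : 0 < x₀) {k : ℤ} (hx : x / P ^ k ∈ Ico x₀ (P * x₀)) :
    ⌊Real.logb P (x / x₀)⌋ = k := by
  rw [div_zpow_mem_Ico_iff (by linarith) hx₀] at hx
  have hpos : 0 < x / x₀ := (zpow_pos (by linarith) k).trans_le hx.1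
  rw [Int.floor_eq_iff, Real.le_logb_iff_rpow_le hP hpos, Real.logb_lt_iff_lt_rpow hP hpos,
    Real.rpow_intCast, ← Int.cast_one, ← Int.cast_add, Real.rpow_intCast]
  exact hx

lemma div_zpow_floor_logb_mem_Ico (hP : 1 < P) (hx₀ : 0 < x₀) (hx : 0 < x) :
    x / P ^ ⌊Real.logb P (x / x₀)⌋ ∈ Ico x₀ (P * x₀) := by
  obtain ⟨k, hk⟩ := exists_mem_Ico_zpow (div_pos hx hx₀) hP
  rw [← div_zpow_mem_Ico_iff (by linarith) hx₀] at hk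
  rwa [floor_logb_div_eq hP hx₀ hk]

lemma periodicExtension_eq_of_mem_Ico (hP : 1 < P) (hx₀ : 0 < x₀) {k : ℤ}
    (hx : x / P ^ k ∈ Ico x₀ (P * x₀)) : periodicExtension P x₀ g x = g (x / P ^ k) := by
  rw [periodicExtension, floor_logb_div_eq hP hx₀ hx]

lemma periodicExtension_eq_of_mem_Icc (hP : 1 < P) (hx₀ : 0 < x₀) (hg : g x₀ = g (P * x₀))
    {k : ℤ} (hx : x / P ^ k ∈ Icc x₀ (P * x₀)) : periodicExtension P x₀ g x = g (x / P ^ k) := by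
  rcases hx.2.lt_or_eq with hlt | heq
  · exact periodicExtension_eq_of_mem_Ico hP hx₀ ⟨hx.1, hlt⟩
  · have hx' : x / P ^ (k + 1) = x₀ := by
      rw [zpow_add_one₀ (by linarith), ← div_div, heq, mul_div_cancel_left₀ _ (by linarith)]
    rw [periodicExtension_eq_of_mem_Ico hP hx₀ (k := k + 1) (by simp [hx', hx₀, hP]), hx', heq, hg]

lemma periodicExtension_eq_of_mem_Icc_self (hP : 1 < P) (hx₀ : 0 < x₀) (hg : g x₀ = g (P * x₀))
    (hx : x ∈ Icc x₀ (P * x₀)) : periodicExtension P x₀ g x = g x := by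
  simpa using periodicExtension_eq_of_mem_Icc hP hx₀ hg (k := 0) (by simpa using hx)

lemma periodicExtension_mul_self (hP : 1 < P) (hx₀ : 0 < x₀) (hx : 0 < x) :
    periodicExtension P x₀ g (P * x) = periodicExtension P x₀ g x := by
  have hk := div_zpow_floor_logb_mem_Ico hP hx₀ hx
  have hPx : P * x / P ^ (⌊Real.logb P (x / x₀)⌋ + 1) = x / P ^ ⌊Real.logb P (x / x₀)⌋ := by
    rw [zpow_add_one₀ (by linarith)]
    field_simp
  rw [periodicExtension_eq_of_mem_Ico hP hx₀ (hPx ▸ hk), hPx, periodicExtension]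

end PeriodicExtension

lemma IsPeriodPartition.piecewiseAffineWith_periodicExtension {S : Set ℝ} {g : ℝ → ℝ} {P : ℝ}
    {N : ℕ} {μ s : ℕ → ℝ} (h : IsPeriodPartition g P N μ s) (hP : 1 < P)
    (hg : g (μ 0) = g (P * μ 0)) (hS : ∀ s ∈ S, ∀ k : ℤ, s / P ^ k ∈ S)
    (hs : ∀ i ≤ N, s i ∈ S) : PiecewiseAffineWith S (periodicExtension P (μ 0) g) := by
  have hx₀ := h.pos
  set κ : ℝ → ℤ := fun x => ⌊Real.logb P (x / μ 0)⌋
  have hκ : ∀ x y, 0 < x → x ≤ y → κ x ≤ κ y := fun x y hx hxy =>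
    Int.floor_mono (Real.logb_le_logb_of_le hP (div_pos hx hx₀)
      (div_le_div_of_nonneg_right hxy hx₀.le))
  refine piecewiseAffineWith_of_forall_exists fun u v hu huv =>
    ⟨(Finset.Icc (κ u) (κ v) ×ˢ Finset.range (N + 2)).image fun q => P ^ q.1 * μ q.2,
      fun z hz => ?_⟩
  have hz0 : 0 < z := hu.trans hz.1
  have hk := div_zpow_floor_logb_mem_Ico hP hx₀ hz0
  have hPk : 0 < P ^ κ z := zpow_pos (by linarith) _
  obtain ⟨i, hi, hzi⟩ := exists_mem_Ico_of_le_of_lt (t := μ) hk.1 (h.last ▸ hk.2)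
  have hmemE : ∀ j ≤ N + 1, P ^ κ z * μ j ∈
      (Finset.Icc (κ u) (κ v) ×ˢ Finset.range (N + 2)).image fun q => P ^ q.1 * μ q.2 :=
    fun j hj => Finset.mem_image.2 ⟨(κ z, j), Finset.mem_product.2
      ⟨Finset.mem_Icc.2 ⟨hκ _ _ hu hz.1.le, hκ _ _ hz0 hz.2.le⟩, Finset.mem_range.2 (by omega)⟩,
      rfl⟩
  refine ⟨_, hmemE i (by omega), _, hmemE (i + 1) (by omega), ?_, s i / P ^ κ z,
    hS _ (hs i (by omega)) _, ?_⟩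
  · rwa [mem_Ico, ← le_div_iff₀' hPk, ← div_lt_iff₀' hPk]
  · obtain ⟨c, hc⟩ := h.affine i (by omega)
    refine ⟨c, fun w hw => ?_⟩
    have hw' : w / P ^ κ z ∈ Icc (μ i) (μ (i + 1)) := by
      rwa [Set.mem_Icc, le_div_iff₀' hPk, div_le_iff₀' hPk]
    rw [periodicExtension_eq_of_mem_Icc hP hx₀ hg ⟨(h.mem_Icc (by omega)).1.trans hw'.1,
      hw'.2.trans (h.mem_Icc (by omega)).2⟩, hc _ hw']
    field_simp

lemma IsPeriodPartition.kCp_periodicExtension {p : ℕ} (hp : 1 < p) {g : ℝ → ℝ} {N : ℕ}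
    {μ s : ℕ → ℝ} (h : IsPeriodPartition g p N μ s) (hg : g (μ 0) = g (p * μ 0))
    (hs : ∀ i ≤ N, s i ∈ HpSet p) : KCp p (periodicExtension p (μ 0) g) := by
  have hP : (1 : ℝ) < p := by exact_mod_cast hp
  have hpa := h.piecewiseAffineWith_periodicExtension hP hg
    (fun _ hs k => div_zpow_mem_hpSet hs k) hs
  exact ⟨hpa.continuousOn, hpa, fun x hx => periodicExtension_mul_self hP h.pos hx⟩

def brokenLine (σ : ℝ) (N : ℕ) (μ a : ℕ → ℝ) (x : ℝ) : ℝ :=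
  σ * (x - μ 0) + ∑ j ∈ Finset.range (N + 1), a j * max 0 (x - μ j)

lemma brokenLine_eq {σ : ℝ} {N : ℕ} {μ a : ℕ → ℝ} (hμ : MonotoneOn μ (Iic (N + 1))) {i : ℕ}
    (hi : i ≤ N) {x : ℝ} (hx : x ∈ Icc (μ i) (μ (i + 1))) :
    brokenLine σ N μ a x = (σ + ∑ j ∈ Finset.range (i + 1), a j) * x +
      (-(σ * μ 0) - ∑ j ∈ Finset.range (i + 1), a j * μ j) := by
  have hsplit : ∑ j ∈ Finset.range (N + 1), a j * max 0 (x - μ j) =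
      ∑ j ∈ Finset.range (i + 1), a j * (x - μ j) := by
    rw [← Finset.sum_range_add_sum_Ico _ (by omega : i + 1 ≤ N + 1)]
    have hzero : ∑ j ∈ Finset.Ico (i + 1) (N + 1), a j * max 0 (x - μ j) = 0 :=
      Finset.sum_eq_zero fun j hj => by
        obtain ⟨hj1, hj2⟩ := Finset.mem_Ico.1 hj
        have := hx.2.trans (hμ (mem_Iic.2 (by omega)) (mem_Iic.2 hj2.le) hj1)
        rw [max_eq_left (by linarith), mul_zero]
    rw [hzero, add_zero]
    refine Finset.sum_congr rfl fun j hj => ?_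
    have hji := Finset.mem_range_succ_iff.1 hj
    have := (hμ (mem_Iic.2 (by omega)) (mem_Iic.2 (by omega)) hji).trans hx.1
    rw [max_eq_right (by linarith)]
  rw [brokenLine, hsplit]
  simp only [mul_sub, Finset.sum_sub_distrib, ← Finset.sum_mul]
  ring

lemma isPeriodPartition_brokenLine {P σ : ℝ} {N : ℕ} {μ a : ℕ → ℝ} (hμ0 : 0 < μ 0)
    (hlt : ∀ i ≤ N, μ i < μ (i + 1)) (hμN : μ (N + 1) = P * μ 0) :
    IsPeriodPartition (brokenLine σ N μ a) P N μ fun i => σ + ∑ j ∈ Finset.range (i + 1), a j :=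
  have hμ : MonotoneOn μ (Iic (N + 1)) := (strictMonoOn_Iic_of_lt_succ fun i hi => by
    simpa [Order.succ_eq_add_one] using hlt i (by omega)).monotoneOn
  ⟨hμ0, hμN, hlt, fun i hi => ⟨_, fun x hx => brokenLine_eq hμ hi hx⟩⟩

lemma brokenLine_mul_eq {P σ : ℝ} {N : ℕ} {μ a : ℕ → ℝ} (hμ0 : 0 < μ 0)
    (hlt : ∀ i ≤ N, μ i < μ (i + 1)) (hμN : μ (N + 1) = P * μ 0)
    (hA : ∑ j ∈ Finset.range (N + 1), a j = (P - 1) * σ)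
    (hdeg : ∑ j ∈ Finset.range (N + 1), a j * μ j = 0) :
    brokenLine (-(P * σ)) N μ a (μ 0) = brokenLine (-(P * σ)) N μ a (P * μ 0) := by
  have hμ := (isPeriodPartition_brokenLine (σ := -(P * σ)) (a := a) hμ0 hlt hμN).strictMonoOn
  rw [← hμN, brokenLine_eq hμ.monotoneOn (Nat.zero_le N) ⟨le_rfl, (hlt 0 (Nat.zero_le N)).le⟩,
    brokenLine_eq hμ.monotoneOn le_rfl ⟨(hlt N le_rfl).le, le_rfl⟩, hμN, hA, hdeg]
  simp only [zero_add, Finset.sum_range_one]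
  ring

theorem sum_eq_zero_of_kCp_of_hasOrdAt {p : ℕ} (hp : 1 < p) {χ : ℝ → ZMod (p - 1)}
    (hχ : IsChi p χ) {n : ℕ} (hn : 1 ≤ n) {lam a : ℕ → ℝ} (hlam0 : 0 < lam 0)
    (hmono : ∀ j, j + 1 < n → lam j < lam (j + 1)) (hlast : lam (n - 1) < p * lam 0)
    {f : ℝ → ℝ} (hf : KCp p f) (hord : ∀ j, j < n → HasOrdAt f (lam j) (a j * lam j))
    (hord0 : ∀ x ∈ Ico (lam 0) ((p : ℝ) * lam 0), (∀ j, j < n → x ≠ lam j) → HasOrdAt f x 0) :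
    (∑ j ∈ Finset.range n, a j * lam j) = 0 ∧ (∑ j ∈ Finset.range n, χ (a j)) = 0 := by
  obtain ⟨-, hpa, hper⟩ := hf
  have hP : (1 : ℝ) < p := by exact_mod_cast hp
  obtain ⟨M, t, hM, ht0, htM, htmono, hpieces⟩ := hpa (lam 0) (p * lam 0) hlam0 (by nlinarith)
  obtain ⟨K, rfl⟩ : ∃ K, M = K + 1 := ⟨M - 1, by omega⟩
  choose! s hs hsaff using hpieces
  have hpart : IsPeriodPartition f p K t s :=
    ⟨ht0 ▸ hlam0, by rw [htM, ht0], fun i hi => htmono i (by omega),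
      fun i hi => hsaff i (by omega)⟩
  have hlam : StrictMonoOn lam (Iic (n - 1)) :=
    strictMonoOn_Iic_of_lt_succ fun j hj => by
      simpa [Order.succ_eq_add_one] using hmono j (by omega)
  have hlam_mem : ∀ j < n, lam j ∈ Ico (t 0) (t (K + 1)) := fun j hj => by
    rw [ht0, htM]
    exact ⟨hlam.monotoneOn (by simp) (by simp; omega) (Nat.zero_le j),
      (hlam.monotoneOn (by simp; omega) (by simp) (by omega)).trans_lt hlast⟩
  have hjump : ∀ j < n, jump f (lam j) = a j := fun j hj => by
    have hpos : 0 < lam j := (ht0 ▸ hlam0).trans_le (hlam_mem j hj).1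
    rw [(hord j hj).jump_eq hpos.ne', mul_div_cancel_right₀ _ hpos.ne']
  have htransfer := fun {A : Type} [AddCommMonoid A] (w : ℝ → A) hw =>
    hpart.sum_range_comp_eq (w := w) hw (hlam.injOn.mono fun j hj => by simp at hj ⊢; omega)
      hlam_mem (ht0 ▸ htM ▸ hord0)
  constructor
  · calc ∑ j ∈ Finset.range n, a j * lam j
        = ∑ j ∈ Finset.range n, lam j * jump f (lam j) :=
          Finset.sum_congr rfl fun j hj => by rw [hjump j (Finset.mem_range.1 hj), mul_comm]
      _ = ∑ i ∈ Finset.range (K + 1), t i * jump f (t i) :=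
          htransfer (fun x => x * jump f x) fun x hx => by simp [hx]
      _ = 0 := hpart.sum_mul_jump_eq_zero (by linarith) hper
  · calc ∑ j ∈ Finset.range n, χ (a j)
        = ∑ j ∈ Finset.range n, χ (jump f (lam j)) :=
          Finset.sum_congr rfl fun j hj => by rw [hjump j (Finset.mem_range.1 hj)]
      _ = ∑ i ∈ Finset.range (K + 1), χ (jump f (t i)) :=
          htransfer (fun x => χ (jump f x)) fun x hx => by simp [hx, chi_zero hχ]
      _ = 0 := hpart.sum_chi_jump_eq_zero hχ (by omega) (fun i hi => hs i (by omega)) hper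

theorem exists_kCp_hasOrdAt_of_sum_eq_zero {p : ℕ} (hp : 1 < p) {χ : ℝ → ZMod (p - 1)}
    (hχ : IsChi p χ) {n : ℕ} (hn : 1 ≤ n) {lam a : ℕ → ℝ} (hlam0 : 0 < lam 0)
    (hmono : ∀ j, j + 1 < n → lam j < lam (j + 1)) (hlast : lam (n - 1) < p * lam 0)
    (ha : ∀ j, j < n → a j ∈ HpSet p) (hdeg : ∑ j ∈ Finset.range n, a j * lam j = 0)
    (hchi : ∑ j ∈ Finset.range n, χ (a j) = 0) :
    ∃ f : ℝ → ℝ, KCp p f ∧ (∀ j, j < n → HasOrdAt f (lam j) (a j * lam j)) ∧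
      ∀ x ∈ Ico (lam 0) ((p : ℝ) * lam 0), (∀ j, j < n → x ≠ lam j) → HasOrdAt f x 0 := by
  obtain ⟨N, rfl⟩ : ∃ N, n = N + 1 := ⟨n - 1, by omega⟩
  have hP : (1 : ℝ) < p := by exact_mod_cast hp
  have hp0 : p ≠ 0 := by omega
  obtain ⟨σ, hσ, hA⟩ := exists_eq_pred_mul_of_chi_eq_zero hχ hp0
    ((hpAddSubgroup hp0).sum_mem fun j hj => ha j (Finset.mem_range.1 hj))
    (by rw [chi_sum hχ hp0 ha, hchi])
  set μ : ℕ → ℝ := fun j => if j ≤ N then lam j else p * lam 0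
  have hμ : ∀ j ≤ N, μ j = lam j := fun j hj => if_pos hj
  have hμ0 : μ 0 = lam 0 := hμ 0 (Nat.zero_le N)
  have hμN : μ (N + 1) = p * μ 0 := by simp [μ, hμ0]
  have hlt : ∀ i ≤ N, μ i < μ (i + 1) := fun i hi => by
    rcases hi.lt_or_eq with hi | rfl
    · rw [hμ i hi.le, hμ (i + 1) hi]
      exact hmono i (by omega)
    · simpa [μ] using hlast
  have hpart := isPeriodPartition_brokenLine (σ := -(p * σ)) (a := a) (hμ0 ▸ hlam0) hlt hμN
  have hg := brokenLine_mul_eq (hμ0 ▸ hlam0) hlt hμN hA (by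
    rw [← hdeg]
    exact Finset.sum_congr rfl fun j hj => by rw [hμ j (Finset.mem_range_succ_iff.1 hj)])
  have hfpart := hpart.congr fun x hx => periodicExtension_eq_of_mem_Icc_self hP hpart.pos hg hx
  have hs : ∀ i ≤ N, -(p * σ) + ∑ j ∈ Finset.range (i + 1), a j ∈ HpSet p := fun i hi =>
    (hpAddSubgroup hp0).add_mem ((hpAddSubgroup hp0).neg_mem (natCast_mul_mem_hpSet hσ))
      ((hpAddSubgroup hp0).sum_mem fun j hj => ha j (by simp at hj; omega))
  refine ⟨_, hpart.kCp_periodicExtension hp hg hs, fun j hj => ?_, fun x hx hne => ?_⟩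
  · rw [← hμ j (by omega)]
    refine hfpart.hasOrdAt_of_sub_eq (by linarith)
      (fun y hy => periodicExtension_mul_self hP hpart.pos hy) ?_ (fun i hi => ?_) (by omega)
    · simp only [zero_add, Finset.sum_range_one, hA]
      ring
    · rw [Finset.sum_range_succ _ (i + 1)]
      ring
  · exact hfpart.hasOrdAt_of_ne (by rwa [hμN, hμ0]) fun i hi => hμ i hi ▸ hne i (by omega)

lemma ZMod.exists_intCast_eq_of_lt {k : ℕ} (hk : k ≠ 0) (m : ZMod k) (d : ℝ) :
    ∃ r : ℤ, d < r ∧ (r : ZMod k) = m := by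
  obtain ⟨r, rfl⟩ := ZMod.intCast_surjective m
  obtain ⟨K, hK⟩ := exists_nat_gt (d - r)
  refine ⟨r + k * K, ?_, by simp⟩
  have hk1 : (1 : ℝ) ≤ k := by exact_mod_cast Nat.one_le_iff_ne_zero.2 hk
  have : (K : ℝ) ≤ k * K := le_mul_of_one_le_left K.cast_nonneg hk1
  push_cast
  linarith

theorem exists_divisor_with_sums {p : ℕ} (hp : 1 < p) {χ : ℝ → ZMod (p - 1)} (hχ : IsChi p χ)
    (d : ℝ) (m : ZMod (p - 1)) :
    ∃ n : ℕ, 1 ≤ n ∧ ∃ lam a : ℕ → ℝ, 0 < lam 0 ∧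
      (∀ j, j + 1 < n → lam j < lam (j + 1)) ∧ lam (n - 1) < p * lam 0 ∧
      (∀ j, j < n → a j ∈ HpSet p) ∧
      (∑ j ∈ Finset.range n, a j * lam j) = d ∧ (∑ j ∈ Finset.range n, χ (a j)) = m := by
  -- Points `1 < 1 + (r - d) / N < 2` with coefficients `N + r` and `-N`, where `r > d`, `r ≡ m`.
  obtain ⟨r, hrd, rfl⟩ := ZMod.exists_intCast_eq_of_lt (by omega : p - 1 ≠ 0) m d
  set N : ℕ := ⌊(r : ℝ) - d⌋₊ + 1
  have hN : (r : ℝ) - d < N := by simpa [N] using Nat.lt_floor_add_one ((r : ℝ) - d)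
  have hN0 : (0 : ℝ) < N := by positivity
  have hgap : 0 < ((r : ℝ) - d) / N := div_pos (by linarith) hN0
  have hp2 : (2 : ℝ) ≤ p := by exact_mod_cast hp
  refine ⟨2, by norm_num, fun j => if j = 0 then 1 else 1 + (r - d) / N,
    fun j => ((if j = 0 then N + r else -N : ℤ) : ℝ), by norm_num, fun j hj => ?_, ?_,
    fun j _ => intCast_mem_hpSet _, ?_, ?_⟩
  · obtain rfl : j = 0 := by omega
    simpa using hgap
  · have := (div_lt_one hN0).2 hN
    simp only [Nat.add_one_sub_one, one_ne_zero, if_false, if_true, mul_one]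
    linarith
  · simp only [Finset.sum_range_succ, Finset.sum_range_zero]
    push_cast
    field_simp
    ring
  · simp only [Finset.sum_range_succ, Finset.sum_range_zero, chi_intCast hχ]
    push_cast
    ring

/-- Given points `λ_0 < … < λ_{n−1} < pλ_0` in `(0,∞)` and `a_j ∈ H_p`, there is
an `f ∈ K(C_p)` with order `a_j λ_j` at each `λ_j` and order `0` elsewhere on `[λ_0, pλ_0)` iff
`Σ a_j λ_j = 0` and `Σ χ(a_j) = 0` in `ℤ/(p−1)ℤ`; moreover every pair
`(d, m) ∈ ℝ × ℤ/(p−1)ℤ` is realized by such data. (Equivalently, `(deg, χ)` induces an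
isomorphism `Div(C_p)/P ≅ ℝ × ℤ/(p−1)ℤ`.) -/
theorem statement6 (p : ℕ) (hp : p.Prime)
    (χ : ℝ → ZMod (p - 1))
    (hχ : ∀ (a : ℤ) (m : ℕ), χ ((a : ℝ) / (p : ℝ) ^ m) = (a : ZMod (p - 1))) :
    (∀ n : ℕ, 1 ≤ n → ∀ lam a : ℕ → ℝ, 0 < lam 0 →
      (∀ j, j + 1 < n → lam j < lam (j + 1)) → lam (n - 1) < p * lam 0 →
      (∀ j, j < n → a j ∈ HpSet p) →
      ((∃ f : ℝ → ℝ, KCp p f ∧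
          (∀ j, j < n → HasOrdAt f (lam j) (a j * lam j)) ∧
          (∀ x ∈ Set.Ico (lam 0) ((p : ℝ) * lam 0),
            (∀ j, j < n → x ≠ lam j) → HasOrdAt f x 0)) ↔
        ((∑ j ∈ Finset.range n, a j * lam j) = 0 ∧
          (∑ j ∈ Finset.range n, χ (a j)) = 0))) ∧
    (∀ (d : ℝ) (m : ZMod (p - 1)),
      ∃ n : ℕ, 1 ≤ n ∧ ∃ lam a : ℕ → ℝ, 0 < lam 0 ∧
        (∀ j, j + 1 < n → lam j < lam (j + 1)) ∧ lam (n - 1) < p * lam 0 ∧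
        (∀ j, j < n → a j ∈ HpSet p) ∧
        (∑ j ∈ Finset.range n, a j * lam j) = d ∧
        (∑ j ∈ Finset.range n, χ (a j)) = m) := by
  refine ⟨fun n hn lam a hlam0 hmono hlast ha => ⟨?_, ?_⟩, exists_divisor_with_sums hp.one_lt hχ⟩
  · rintro ⟨f, hf, hord, hord0⟩
    exact sum_eq_zero_of_kCp_of_hasOrdAt hp.one_lt hχ hn hlam0 hmono hlast hf hord hord0
  · rintro ⟨hdeg, hchi⟩
    exact exists_kCp_hasOrdAt_of_sum_eq_zero hp.one_lt hχ hn hlam0 hmono hlast ha hdeg hchi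
end

section
/- Fix a prime p. For every h ∈ H_p with h > 0 and every μ > 0, the function Θ_{h,μ} satisfies Θ_{h,μ}(pλ) = Θ_{h,μ}(λ) + hλ − μ for all λ > 0. Moreover, given finite families (h_i, μ_i) and (h'_j, μ'_j) in {h ∈ H_p : h > 0} × ℝ_{>0} with Σ_i μ_i − Σ_j μ'_j = 0, and h ∈ H_p with (p−1)h = Σ_i h_i − Σ_j h'_j, the function f(λ) := Σ_i Θ_{h_i,μ_i}(λ) − Σ_j Θ_{h'_j,μ'_j}(λ) − hλ is continuous, piecewise affine with all slopes in H_p, satisfies f(pλ) = f(λ) for all λ > 0, and for every λ > 0 its order satisfies Ord_λ(f) = Σ_{i : λ ∈ p^ℤ·(μ_i/h_i)} μ_i − Σ_{j : λ ∈ p^ℤ·(μ'_j/h'_j)} μ'_j. -/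
/-- `f₊(λ) = Σ_{m≥0} max(0, 1 − p^m λ)`. -/
noncomputable def fPlus (p : ℕ) (lam : ℝ) : ℝ := ∑' m : ℕ, max 0 (1 - (p : ℝ) ^ m * lam)

/-- `f₋(λ) = Σ_{m≥1} max(0, p^{−m} λ − 1)`. -/
noncomputable def fMinus (p : ℕ) (lam : ℝ) : ℝ :=
  ∑' m : ℕ, max 0 (((p : ℝ) ^ (m + 1))⁻¹ * lam - 1)

/-- The basic theta function `θ = f₊ + f₋`. -/
noncomputable def theta (p : ℕ) (lam : ℝ) : ℝ := fPlus p lam + fMinus p lam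

/-- `Θ_{h,μ}(λ) = μ θ(μ⁻¹ h λ)`. -/
noncomputable def ThetaF (p : ℕ) (h μ lam : ℝ) : ℝ := μ * theta p (μ⁻¹ * h * lam)

open Set Filter Topology

def HasSlopeAtFilter (f : ℝ → ℝ) (s x : ℝ) (l : Filter ℝ) : Prop :=
  ∀ᶠ y in l, f y = f x + s * (y - x)

namespace HasSlopeAtFilter

variable {f g : ℝ → ℝ} {s t x : ℝ} {l : Filter ℝ}

lemma of_eqOn {u : Set ℝ} {c : ℝ} (hf : ∀ y ∈ u, f y = s * y + c) (hu : u ∈ l) (hx : x ∈ u) :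
    HasSlopeAtFilter f s x l := by
  filter_upwards [hu] with y hy
  rw [hf y hy, hf x hx]
  ring

lemma sub (hf : HasSlopeAtFilter f s x l) (hg : HasSlopeAtFilter g t x l) :
    HasSlopeAtFilter (fun y => f y - g y) (s - t) x l := by
  filter_upwards [hf, hg] with y hfy hgy
  rw [hfy, hgy]
  ring

lemma const_mul (c : ℝ) : HasSlopeAtFilter (fun y => c * y) c x l :=
  Eventually.of_forall fun y => by ring

lemma sum {ι : Type*} {F : ι → ℝ → ℝ} {σ : ι → ℝ} {I : Finset ι}
    (h : ∀ i ∈ I, HasSlopeAtFilter (F i) (σ i) x l) :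
    HasSlopeAtFilter (fun y => ∑ i ∈ I, F i y) (∑ i ∈ I, σ i) x l := by
  filter_upwards [(eventually_all_finset I).2 h] with y hy
  rw [Finset.sum_mul, ← Finset.sum_add_distrib]
  exact Finset.sum_congr rfl hy

lemma continuousWithinAt {u : Set ℝ} (hf : HasSlopeAtFilter f s x (𝓝[u] x)) :
    ContinuousWithinAt f u x :=
  (by fun_prop : Continuous fun y => f x + s * (y - x)).continuousWithinAt.congr_of_eventuallyEq
    hf (by ring)

end HasSlopeAtFilter

section HasOrdAt

variable {f g : ℝ → ℝ} {s x d e : ℝ}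

lemma hasRightSlope_iff : HasRightSlope f x s ↔ HasSlopeAtFilter f s x (𝓝[≥] x) := by
  rw [HasSlopeAtFilter, Filter.Eventually, mem_nhdsGE_iff_exists_Ico_subset]
  constructor
  · rintro ⟨δ, hδ, h⟩
    exact ⟨x + δ, by simpa using hδ, h⟩
  · rintro ⟨u, hu, h⟩
    exact ⟨u - x, sub_pos.2 hu, by rwa [add_sub_cancel]⟩

lemma hasLeftSlope_iff : HasLeftSlope f x s ↔ HasSlopeAtFilter f s x (𝓝[≤] x) := by
  rw [HasSlopeAtFilter, Filter.Eventually, mem_nhdsLE_iff_exists_Ioc_subset]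
  constructor
  · rintro ⟨δ, hδ, h⟩
    exact ⟨x - δ, by simpa using hδ, h⟩
  · rintro ⟨u, hu, h⟩
    exact ⟨x - u, sub_pos.2 hu, by rwa [sub_sub_cancel]⟩

lemma hasOrdAt_iff : HasOrdAt f x d ↔ ∃ sp sm, HasSlopeAtFilter f sp x (𝓝[≥] x) ∧
    HasSlopeAtFilter f sm x (𝓝[≤] x) ∧ d = x * (sp - sm) := by
  simp only [HasOrdAt, hasRightSlope_iff, hasLeftSlope_iff]

lemma HasOrdAt.continuousAt (hf : HasOrdAt f x d) : ContinuousAt f x := by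
  obtain ⟨sp, sm, hp, hm, -⟩ := hasOrdAt_iff.1 hf
  exact continuousAt_iff_continuous_left_right.2 ⟨hm.continuousWithinAt, hp.continuousWithinAt⟩

lemma HasOrdAt.sub (hf : HasOrdAt f x d) (hg : HasOrdAt g x e) :
    HasOrdAt (fun y => f y - g y) x (d - e) := by
  obtain ⟨sp, sm, hfp, hfm, rfl⟩ := hasOrdAt_iff.1 hf
  obtain ⟨tp, tm, hgp, hgm, rfl⟩ := hasOrdAt_iff.1 hg
  exact hasOrdAt_iff.2 ⟨sp - tp, sm - tm, hfp.sub hgp, hfm.sub hgm, by ring⟩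

lemma hasOrdAt_const_mul (c : ℝ) : HasOrdAt (fun y => c * y) x 0 :=
  hasOrdAt_iff.2 ⟨c, c, .const_mul c, .const_mul c, by ring⟩

lemma hasOrdAt_sum {ι : Type*} {F : ι → ℝ → ℝ} {D : ι → ℝ} {I : Finset ι}
    (h : ∀ i ∈ I, HasOrdAt (F i) x (D i)) :
    HasOrdAt (fun y => ∑ i ∈ I, F i y) x (∑ i ∈ I, D i) := by
  simp only [hasOrdAt_iff] at h
  choose! sp sm hp hm hD using h
  refine hasOrdAt_iff.2 ⟨_, _, .sum hp, .sum hm, ?_⟩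
  rw [← Finset.sum_sub_distrib, Finset.mul_sum]
  exact Finset.sum_congr rfl hD

end HasOrdAt

def AffineOnWith (S : Set ℝ) (f : ℝ → ℝ) (a b : ℝ) : Prop :=
  ∃ s ∈ S, ∃ c : ℝ, ∀ x ∈ Icc a b, f x = s * x + c

lemma affineOnWith_const_mul {S : Set ℝ} {c a b : ℝ} (hc : c ∈ S) :
    AffineOnWith S (fun x => c * x) a b :=
  ⟨c, hc, 0, fun x _ => by ring⟩

section AffineOnWith

variable {σ : Type*} [SetLike σ ℝ] [AddSubgroupClass σ ℝ] {S : σ} {f g : ℝ → ℝ} {a b : ℝ}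

lemma AffineOnWith.sub (hf : AffineOnWith S f a b) (hg : AffineOnWith S g a b) :
    AffineOnWith S (fun x => f x - g x) a b := by
  obtain ⟨s, hs, c, hf⟩ := hf
  obtain ⟨t, ht, d, hg⟩ := hg
  exact ⟨s - t, sub_mem hs ht, c - d, fun x hx => by simp only [hf x hx, hg x hx]; ring⟩

lemma affineOnWith_sum {ι : Type*} {F : ι → ℝ → ℝ} (I : Finset ι)
    (h : ∀ i ∈ I, AffineOnWith S (F i) a b) :
    AffineOnWith S (fun x => ∑ i ∈ I, F i x) a b := by
  choose! s hs c hc using h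
  refine ⟨∑ i ∈ I, s i, sum_mem hs, ∑ i ∈ I, c i, fun x hx => ?_⟩
  rw [Finset.sum_mul, ← Finset.sum_add_distrib]
  exact Finset.sum_congr rfl fun i hi => hc i hi x hx

end AffineOnWith

def HasAffinePartition (S : Set ℝ) (f : ℝ → ℝ) (u v : ℝ) : Prop :=
  ∃ (n : ℕ) (t : ℕ → ℝ), 0 < n ∧ t 0 = u ∧ t n = v ∧ (∀ i < n, t i < t (i + 1)) ∧
    ∀ i < n, AffineOnWith S f (t i) (t (i + 1))

namespace HasAffinePartition

variable {S : Set ℝ} {f : ℝ → ℝ} {u v w : ℝ}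

lemma single (huv : u < v) (hf : AffineOnWith S f u v) : HasAffinePartition S f u v :=
  ⟨1, fun i => if i = 0 then u else v, one_pos, rfl, rfl, by simpa using huv, by simpa using hf⟩

lemma snoc (H : HasAffinePartition S f u v) (hvw : v < w) (hf : AffineOnWith S f v w) :
    HasAffinePartition S f u w := by
  obtain ⟨n, t, hn, ht0, htn, hmono, haff⟩ := H
  refine ⟨n + 1, fun i => if i ≤ n then t i else w, n.succ_pos, by simpa using ht0,
    by simp, fun i hi => ?_, fun i hi => ?_⟩
  · rcases Nat.lt_succ_iff_lt_or_eq.1 hi with hi | rfl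
    · simpa [hi.le, Nat.succ_le_of_lt hi] using hmono i hi
    · simpa [htn] using hvw
  · rcases Nat.lt_succ_iff_lt_or_eq.1 hi with hi | rfl
    · simpa [hi.le, Nat.succ_le_of_lt hi] using haff i hi
    · simpa [htn] using hf

lemma of_finite_breaks {D : Set ℝ} (B : Finset ℝ) (huv : u < v) (hDB : D ∩ Ioo u v ⊆ B)
    (haff : ∀ a b, u ≤ a → a < b → Disjoint (Ioo a b) D → AffineOnWith S f a b) :
    HasAffinePartition S f u v := by
  classical
  induction B using Finset.induction_on_max generalizing v with
  | empty =>
    refine single huv (haff u v le_rfl huv (Set.disjoint_left.2 fun x hx hxD => ?_))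
    simpa using hDB ⟨hxD, hx⟩
  | insert w B hw ih =>
    have hDB' : ∀ v', v' ≤ v → w ∉ Ioo u v' → D ∩ Ioo u v' ⊆ B := by
      rintro v' hv' hw' x ⟨hxD, hx⟩
      have := hDB ⟨hxD, hx.1, hx.2.trans_le hv'⟩
      rw [Finset.coe_insert, mem_insert_iff] at this
      exact this.resolve_left (by rintro rfl; exact hw' hx)
    by_cases hwuv : w ∈ Ioo u v
    · refine (ih hwuv.1 (hDB' w hwuv.2.le (by simp))).snoc hwuv.2
        (haff w v hwuv.1.le hwuv.2 (Set.disjoint_left.2 fun x hx hxD => ?_))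
      have := hDB ⟨hxD, hwuv.1.trans hx.1, hx.2⟩
      rw [Finset.coe_insert, mem_insert_iff] at this
      rcases this with rfl | hxB
      · exact lt_irrefl _ hx.1
      · exact lt_asymm hx.1 (hw x hxB)
    · exact ih huv (hDB' v le_rfl hwuv)

end HasAffinePartition

lemma PiecewiseAffineWith.of_finite_breaks {S : Set ℝ} {f : ℝ → ℝ} {D : Set ℝ}
    (hD : ∀ u v, 0 < u → (D ∩ Ioo u v).Finite)
    (haff : ∀ a b, 0 < a → a < b → Disjoint (Ioo a b) D → AffineOnWith S f a b) :
    PiecewiseAffineWith S f := fun u v hu huv =>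
  HasAffinePartition.of_finite_breaks (hD u v hu).toFinset huv (by simp)
    fun a b hua hab hdisj => haff a b (hu.trans_le hua) hab hdisj

section HpSet

variable {p : ℕ}

def HpSubring (p : ℕ) (hp : p ≠ 0) : Subring ℝ where
  carrier := HpSet p
  zero_mem' := ⟨0, 0, by simp⟩
  one_mem' := ⟨1, 0, by simp⟩
  add_mem' := by
    rintro _ _ ⟨a, n, rfl⟩ ⟨b, m, rfl⟩
    refine ⟨a * p ^ m + b * p ^ n, n + m, ?_⟩
    field_simp
    push_cast
    ring
  neg_mem' := by
    rintro _ ⟨a, n, rfl⟩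
    exact ⟨-a, n, by push_cast; ring⟩
  mul_mem' := by
    rintro _ _ ⟨a, n, rfl⟩ ⟨b, m, rfl⟩
    exact ⟨a * b, n + m, by push_cast; ring⟩

lemma zpow_mem_HpSet (hp : p ≠ 0) (k : ℤ) : (p : ℝ) ^ k ∈ HpSet p := by
  obtain ⟨n, rfl | rfl⟩ := Int.eq_nat_or_neg k
  · exact_mod_cast natCast_mem (HpSubring p hp) (p ^ n)
  · exact ⟨1, n, by simp [div_eq_inv_mul]⟩

end HpSet

section Theta

variable {p : ℕ} {x : ℝ}

/-- The slope of `θ` on `[p ^ k, p ^ (k + 1)]`. -/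
noncomputable def thetaSlope (p : ℕ) (k : ℤ) : ℝ := (1 - (p : ℝ) ^ (-k)) / ((p : ℝ) - 1)

lemma thetaSlope_zero : thetaSlope p 0 = 0 := by simp [thetaSlope]

lemma thetaSlope_succ_mul (hp : 1 < (p : ℝ)) (k : ℤ) :
    thetaSlope p (k + 1) * p = thetaSlope p k + 1 := by
  have : (p : ℝ) - 1 ≠ 0 := by linarith
  rw [thetaSlope, thetaSlope, neg_add, zpow_add₀ (by positivity), zpow_neg_one]
  field_simp
  ring

lemma thetaSlope_sub_pred (hp : 1 < (p : ℝ)) (k : ℤ) :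
    thetaSlope p k - thetaSlope p (k - 1) = (p : ℝ) ^ (-k) := by
  have : (p : ℝ) - 1 ≠ 0 := by linarith
  rw [thetaSlope, thetaSlope, neg_sub, sub_eq_add_neg (1 : ℤ), zpow_add₀ (by positivity),
    zpow_one]
  field_simp
  ring

lemma thetaSlope_mem_HpSet (hp : 1 < (p : ℝ)) (k : ℤ) : thetaSlope p k ∈ HpSet p := by
  have hp0 : p ≠ 0 := by rintro rfl; norm_num at hp
  let H := HpSubring p hp0
  have hpinv : (p : ℝ)⁻¹ ∈ H := by
    have := zpow_mem_HpSet hp0 (-1 : ℤ)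
    rwa [zpow_neg_one] at this
  change thetaSlope p k ∈ H
  induction k using Int.induction_on with
  | zero => rw [thetaSlope_zero]; exact zero_mem H
  | succ k ih =>
    rw [← mul_inv_cancel_right₀ (by positivity : (p : ℝ) ≠ 0) (thetaSlope p _),
      thetaSlope_succ_mul hp k]
    exact mul_mem (add_mem ih (one_mem H)) hpinv
  | pred k ih =>
    rw [eq_sub_of_add_eq (thetaSlope_succ_mul hp (-k - 1)).symm, sub_add_cancel]
    exact sub_mem (mul_mem ih (natCast_mem H p)) (one_mem H)


lemma summable_fPlus (hp : 1 < (p : ℝ)) (hx : 0 < x) :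
    Summable fun m : ℕ => max 0 (1 - (p : ℝ) ^ m * x) := by
  obtain ⟨N, hN⟩ := pow_unbounded_of_one_lt x⁻¹ hp
  refine summable_of_ne_finset_zero (s := Finset.range N) fun m hm => max_eq_left ?_
  have : 1 < (p : ℝ) ^ m * x :=
    calc 1 = x⁻¹ * x := (inv_mul_cancel₀ hx.ne').symm
      _ < (p : ℝ) ^ N * x := by gcongr
      _ ≤ (p : ℝ) ^ m * x := by gcongr; exacts [hp.le, by simpa using hm]
  linarith

lemma summable_fMinus (hp : 1 < (p : ℝ)) :
    Summable fun m : ℕ => max 0 (((p : ℝ) ^ (m + 1))⁻¹ * x - 1) := by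
  obtain ⟨N, hN⟩ := pow_unbounded_of_one_lt x hp
  refine summable_of_ne_finset_zero (s := Finset.range N) fun m hm => max_eq_left ?_
  have : (p : ℝ) ^ N ≤ (p : ℝ) ^ (m + 1) := pow_le_pow_right₀ hp.le (by simp at hm; omega)
  rw [sub_nonpos, inv_mul_le_iff₀ (by positivity), mul_one]
  linarith

lemma fPlus_eq_max_add_fPlus_mul (hp : 1 < (p : ℝ)) (hx : 0 < x) :
    fPlus p x = max 0 (1 - x) + fPlus p (p * x) := by
  simp only [fPlus, (summable_fPlus hp hx).tsum_eq_zero_add, pow_zero, one_mul, pow_succ,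
    mul_assoc]

lemma fMinus_mul (hp : 1 < (p : ℝ)) :
    fMinus p (p * x) = max 0 (x - 1) + fMinus p x := by
  have hp0 : (p : ℝ) ≠ 0 := by positivity
  rw [fMinus, (summable_fMinus hp).tsum_eq_zero_add, fMinus, zero_add, pow_one,
    inv_mul_cancel_left₀ hp0]
  congr 1
  refine tsum_congr fun m => ?_
  rw [pow_succ _ (m + 1), mul_inv, mul_assoc, inv_mul_cancel_left₀ hp0]

lemma theta_mul (hp : 1 < (p : ℝ)) (hx : 0 < x) : theta p (p * x) = theta p x + x - 1 := by
  have hmax : max 0 (x - 1) - max 0 (1 - x) = x - 1 := by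
    rcases le_total x 1 with h | h
    · rw [max_eq_left (by linarith), max_eq_right (by linarith)]; ring
    · rw [max_eq_right (by linarith), max_eq_left (by linarith)]; ring
  rw [theta, theta, fMinus_mul hp, fPlus_eq_max_add_fPlus_mul hp hx]
  linarith

lemma theta_eq_zero (hp : 1 < (p : ℝ)) (hx : x ∈ Icc 1 (p : ℝ)) : theta p x = 0 := by
  have hplus : ∀ m : ℕ, max 0 (1 - (p : ℝ) ^ m * x) = 0 := fun m =>
    max_eq_left (sub_nonpos.2 (one_le_mul_of_one_le_of_one_le (one_le_pow₀ hp.le) hx.1))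
  have hminus : ∀ m : ℕ, max 0 (((p : ℝ) ^ (m + 1))⁻¹ * x - 1) = 0 := fun m => by
    refine max_eq_left ?_
    rw [sub_nonpos, inv_mul_le_iff₀ (by positivity), mul_one]
    exact hx.2.trans (le_self_pow₀ hp.le (by omega))
  simp [theta, fPlus, fMinus, hplus, hminus]


lemma mul_mem_Icc_zpow_iff (hp : 1 < (p : ℝ)) (k : ℤ) :
    p * x ∈ Icc ((p : ℝ) ^ (k + 1)) ((p : ℝ) ^ (k + 1 + 1)) ↔
      x ∈ Icc ((p : ℝ) ^ k) ((p : ℝ) ^ (k + 1)) := by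
  have hp0 : (0 : ℝ) < p := by positivity
  simp only [mem_Icc, zpow_add_one₀ hp0.ne', mul_comm _ (p : ℝ),
    mul_le_mul_iff_right₀ hp0]

lemma theta_mul_eq_iff (hp : 1 < (p : ℝ)) (hx : 0 < x) (k : ℤ) :
    theta p (p * x) = thetaSlope p (k + 1) * (p * x) - ↑(k + 1) ↔
      theta p x = thetaSlope p k * x - k := by
  have hslope := thetaSlope_succ_mul hp k
  rw [theta_mul hp hx]
  push_cast
  constructor
  · intro h
    linear_combination h + x * hslope
  · intro h
    linear_combination h - x * hslope

lemma theta_eq_of_mem_Icc (hp : 1 < (p : ℝ)) (k : ℤ)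
    (hx : x ∈ Icc ((p : ℝ) ^ k) ((p : ℝ) ^ (k + 1))) :
    theta p x = thetaSlope p k * x - k := by
  have hp0 : (p : ℝ) ≠ 0 := by positivity
  induction k using Int.induction_on generalizing x with
  | zero =>
    rw [thetaSlope_zero, theta_eq_zero hp (by simpa using hx)]
    simp
  | succ k ih =>
    have hx' : p * (x / p) ∈ Icc ((p : ℝ) ^ ((k : ℤ) + 1)) ((p : ℝ) ^ ((k : ℤ) + 1 + 1)) := by
      rwa [mul_div_cancel₀ x hp0]
    have hpos : 0 < x / p := lt_of_lt_of_le (by positivity) ((mul_mem_Icc_zpow_iff hp _).1 hx').1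
    simpa only [mul_div_cancel₀ x hp0] using
      (theta_mul_eq_iff hp hpos _).2 (ih ((mul_mem_Icc_zpow_iff hp _).1 hx'))
  | pred k ih =>
    have hpos : 0 < x := lt_of_lt_of_le (by positivity) hx.1
    refine (theta_mul_eq_iff hp hpos _).1 ?_
    have hpx := (mul_mem_Icc_zpow_iff hp _).2 hx
    rw [sub_add_cancel] at hpx ⊢
    exact ih hpx

end Theta

/-- The set `p^ℤ · c`. -/
def zpowOrbit (p : ℕ) (c : ℝ) : Set ℝ := {x | ∃ m : ℤ, x = (p : ℝ) ^ m * c}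

lemma zpowOrbit_inter_Ioo_finite {p : ℕ} (hp : 1 < (p : ℝ)) {c u v : ℝ} (hc : 0 < c)
    (hu : 0 < u) : (zpowOrbit p c ∩ Ioo u v).Finite := by
  obtain ⟨L, hL, -⟩ := exists_mem_Ico_zpow (div_pos hu hc) hp
  obtain ⟨N, hN⟩ := pow_unbounded_of_one_lt (v / c) hp
  refine ((finite_Ioo L N).image fun m : ℤ => (p : ℝ) ^ m * c).subset ?_
  rintro _ ⟨⟨m, rfl⟩, hmu, hmv⟩
  refine ⟨m, ⟨?_, ?_⟩, rfl⟩
  · rw [← zpow_lt_zpow_iff_right₀ hp]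
    exact hL.trans_lt ((div_lt_iff₀ hc).2 hmu)
  · rw [← zpow_lt_zpow_iff_right₀ hp, zpow_natCast]
    exact ((lt_div_iff₀ hc).2 hmv).trans hN

section ThetaF

variable {p : ℕ} {h μ x : ℝ}

lemma ThetaF_mul (hp : 1 < (p : ℝ)) (hh : 0 < h) (hμ : 0 < μ) (hx : 0 < x) :
    ThetaF p h μ (p * x) = ThetaF p h μ x + h * x - μ := by
  rw [ThetaF, ThetaF, mul_left_comm _ (p : ℝ), theta_mul hp (by positivity)]
  field_simp

lemma ThetaF_eq_of_mem_Icc (hp : 1 < (p : ℝ)) (hh : 0 < h) (hμ : 0 < μ) (k : ℤ)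
    (hx : x ∈ Icc ((p : ℝ) ^ k * (μ / h)) ((p : ℝ) ^ (k + 1) * (μ / h))) :
    ThetaF p h μ x = h * thetaSlope p k * x - μ * k := by
  have hc : 0 < μ / h := by positivity
  have hx' : μ⁻¹ * h * x ∈ Icc ((p : ℝ) ^ k) ((p : ℝ) ^ (k + 1)) := by
    rw [show μ⁻¹ * h * x = x / (μ / h) by field_simp, mem_Icc, le_div_iff₀ hc, div_le_iff₀ hc]
    exact hx
  rw [ThetaF, theta_eq_of_mem_Icc hp k hx']
  field_simp

lemma ThetaF_hasSlopeAtFilter (hp : 1 < (p : ℝ)) (hh : 0 < h) (hμ : 0 < μ) (k : ℤ)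
    {l : Filter ℝ} (hl : Icc ((p : ℝ) ^ k * (μ / h)) ((p : ℝ) ^ (k + 1) * (μ / h)) ∈ l)
    (hx : x ∈ Icc ((p : ℝ) ^ k * (μ / h)) ((p : ℝ) ^ (k + 1) * (μ / h))) :
    HasSlopeAtFilter (ThetaF p h μ) (h * thetaSlope p k) x l :=
  .of_eqOn (c := -(μ * k)) (fun y hy => by rw [ThetaF_eq_of_mem_Icc hp hh hμ k hy]; ring) hl hx

open Classical in
lemma hasOrdAt_ThetaF (hp : 1 < (p : ℝ)) (hh : 0 < h) (hμ : 0 < μ) (hx : 0 < x) :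
    HasOrdAt (ThetaF p h μ) x (if x ∈ zpowOrbit p (μ / h) then μ else 0) := by
  have hc : 0 < μ / h := by positivity
  have hmono := zpow_right_strictMono₀ hp
  split_ifs with hmem
  · obtain ⟨m, rfl⟩ := hmem
    have hlt : (p : ℝ) ^ (m - 1) * (μ / h) < (p : ℝ) ^ m * (μ / h) :=
      mul_lt_mul_of_pos_right (hmono (sub_one_lt m)) hc
    have hgt : (p : ℝ) ^ m * (μ / h) < (p : ℝ) ^ (m + 1) * (μ / h) :=
      mul_lt_mul_of_pos_right (hmono (lt_add_one m)) hc
    have hright := ThetaF_hasSlopeAtFilter hp hh hμ m (Icc_mem_nhdsGE_of_mem ⟨le_rfl, hgt⟩)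
      ⟨le_rfl, hgt.le⟩
    have hleft := ThetaF_hasSlopeAtFilter hp hh hμ (m - 1) (l := 𝓝[≤] _)
      (by rw [sub_add_cancel]; exact Icc_mem_nhdsLE_of_mem ⟨hlt, le_rfl⟩)
      (by rw [sub_add_cancel]; exact ⟨hlt.le, le_rfl⟩)
    refine hasOrdAt_iff.2 ⟨_, _, hright, hleft, ?_⟩
    rw [← mul_sub, thetaSlope_sub_pred hp, zpow_neg]
    field_simp
  · obtain ⟨k, hk⟩ := exists_mem_Ico_zpow (div_pos hx hc) hp
    rw [mem_Ico, div_lt_iff₀ hc, le_div_iff₀ hc] at hk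
    have hlo : (p : ℝ) ^ k * (μ / h) < x :=
      lt_of_le_of_ne hk.1 fun heq => hmem ⟨k, heq.symm⟩
    have hI : Icc ((p : ℝ) ^ k * (μ / h)) ((p : ℝ) ^ (k + 1) * (μ / h)) ∈ 𝓝 x :=
      Icc_mem_nhds hlo hk.2
    have hxI := mem_of_mem_nhds hI
    exact hasOrdAt_iff.2 ⟨_, _,
      ThetaF_hasSlopeAtFilter hp hh hμ k (nhdsWithin_le_nhds hI) hxI,
      ThetaF_hasSlopeAtFilter hp hh hμ k (nhdsWithin_le_nhds hI) hxI, by ring⟩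

lemma ThetaF_affineOnWith {a b : ℝ} (hp : 1 < (p : ℝ)) (hhS : h ∈ HpSet p)
    (hh : 0 < h) (hμ : 0 < μ) (ha : 0 < a) (hab : Disjoint (Ioo a b) (zpowOrbit p (μ / h))) :
    AffineOnWith (HpSet p) (ThetaF p h μ) a b := by
  have hc : 0 < μ / h := by positivity
  have hp0 : p ≠ 0 := by rintro rfl; norm_num at hp
  obtain ⟨k, hk⟩ := exists_mem_Ico_zpow (div_pos ha hc) hp
  rw [mem_Ico, div_lt_iff₀ hc, le_div_iff₀ hc] at hk
  have hb : b ≤ (p : ℝ) ^ (k + 1) * (μ / h) :=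
    not_lt.1 fun hb => Set.disjoint_left.1 hab ⟨hk.2, hb⟩ ⟨k + 1, rfl⟩
  refine ⟨h * thetaSlope p k, (HpSubring p hp0).mul_mem hhS (thetaSlope_mem_HpSet hp k),
    -(μ * k), fun y hy => ?_⟩
  rw [ThetaF_eq_of_mem_Icc hp hh hμ k ⟨hk.1.trans hy.1, hy.2.trans hb⟩]
  ring

end ThetaF

noncomputable def thetaCombination {ι ι' : Type*} [Fintype ι] [Fintype ι'] (p : ℕ)
    (hs μs : ι → ℝ) (hs' μs' : ι' → ℝ) (h x : ℝ) : ℝ :=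
  (∑ i, ThetaF p (hs i) (μs i) x) - (∑ j, ThetaF p (hs' j) (μs' j) x) - h * x

section ThetaCombination

variable {ι ι' : Type*} [Fintype ι] [Fintype ι'] {p : ℕ} {hs μs : ι → ℝ} {hs' μs' : ι' → ℝ}
  {h : ℝ}

lemma thetaCombination_mul (hp : 1 < (p : ℝ)) (hpos : ∀ i, 0 < hs i ∧ 0 < μs i)
    (hpos' : ∀ j, 0 < hs' j ∧ 0 < μs' j) (hμ : (∑ i, μs i) - (∑ j, μs' j) = 0)
    (hh : ((p : ℝ) - 1) * h = (∑ i, hs i) - (∑ j, hs' j)) {x : ℝ} (hx : 0 < x) :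
    thetaCombination p hs μs hs' μs' h (p * x) = thetaCombination p hs μs hs' μs' h x := by
  simp only [thetaCombination, ThetaF_mul hp (hpos _).1 (hpos _).2 hx,
    ThetaF_mul hp (hpos' _).1 (hpos' _).2 hx, Finset.sum_sub_distrib, Finset.sum_add_distrib,
    ← Finset.sum_mul]
  linear_combination (-x) * hh - hμ

open Classical in
lemma thetaCombination_hasOrdAt (hp : 1 < (p : ℝ)) (hpos : ∀ i, 0 < hs i ∧ 0 < μs i)
    (hpos' : ∀ j, 0 < hs' j ∧ 0 < μs' j) {x : ℝ} (hx : 0 < x) :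
    HasOrdAt (thetaCombination p hs μs hs' μs' h) x
      ((∑ i ∈ Finset.univ.filter (fun i => x ∈ zpowOrbit p (μs i / hs i)), μs i) -
        ∑ j ∈ Finset.univ.filter (fun j => x ∈ zpowOrbit p (μs' j / hs' j)), μs' j) := by
  rw [Finset.sum_filter, Finset.sum_filter, ← sub_zero (_ - _)]
  exact ((hasOrdAt_sum fun i _ => hasOrdAt_ThetaF hp (hpos i).1 (hpos i).2 hx).sub
    (hasOrdAt_sum fun j _ => hasOrdAt_ThetaF hp (hpos' j).1 (hpos' j).2 hx)).sub
    (hasOrdAt_const_mul h)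

lemma thetaCombination_piecewiseAffineWith (hp : 1 < (p : ℝ))
    (hfam : ∀ i, hs i ∈ HpSet p ∧ 0 < hs i ∧ 0 < μs i)
    (hfam' : ∀ j, hs' j ∈ HpSet p ∧ 0 < hs' j ∧ 0 < μs' j) (hhS : h ∈ HpSet p) :
    PiecewiseAffineWith (HpSet p) (thetaCombination p hs μs hs' μs' h) := by
  have hp0 : p ≠ 0 := by rintro rfl; norm_num at hp
  refine PiecewiseAffineWith.of_finite_breaks
    (D := (⋃ i, zpowOrbit p (μs i / hs i)) ∪ ⋃ j, zpowOrbit p (μs' j / hs' j))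
    (fun u v hu => ?_) (fun a b ha _ hdisj => ?_)
  · rw [union_inter_distrib_right, iUnion_inter, iUnion_inter]
    exact (finite_iUnion fun i => zpowOrbit_inter_Ioo_finite hp
      (div_pos (hfam i).2.2 (hfam i).2.1) hu).union (finite_iUnion fun j =>
        zpowOrbit_inter_Ioo_finite hp (div_pos (hfam' j).2.2 (hfam' j).2.1) hu)
  · rw [disjoint_union_right, disjoint_iUnion_right, disjoint_iUnion_right] at hdisj
    exact ((affineOnWith_sum (S := HpSubring p hp0) _ fun i _ =>
      ThetaF_affineOnWith hp (hfam i).1 (hfam i).2.1 (hfam i).2.2 ha (hdisj.1 i)).sub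
      (affineOnWith_sum _ fun j _ =>
        ThetaF_affineOnWith hp (hfam' j).1 (hfam' j).2.1 (hfam' j).2.2 ha (hdisj.2 j))).sub
      (affineOnWith_const_mul hhS)

end ThetaCombination

open Classical in
/-- `Θ_{h,μ}(pλ) = Θ_{h,μ}(λ) + hλ − μ`; and for finite families `(h_i, μ_i)`,
`(h'_j, μ'_j)` with `Σμ_i − Σμ'_j = 0` and `h ∈ H_p` with `(p−1)h = Σh_i − Σh'_j`, the function
`f(λ) = ΣΘ_{h_i,μ_i}(λ) − ΣΘ_{h'_j,μ'_j}(λ) − hλ` is continuous, piecewise affine with slopes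
in `H_p`, satisfies `f(pλ) = f(λ)`, and its order at every `λ > 0` is
`Σ_{i : λ ∈ p^ℤ·(μ_i/h_i)} μ_i − Σ_{j : λ ∈ p^ℤ·(μ'_j/h'_j)} μ'_j`. -/
theorem statement9 (p : ℕ) (hp : p.Prime) :
    (∀ h : ℝ, h ∈ HpSet p → 0 < h → ∀ μ : ℝ, 0 < μ → ∀ lam : ℝ, 0 < lam →
      ThetaF p h μ (p * lam) = ThetaF p h μ lam + h * lam - μ) ∧
    (∀ (k l : ℕ) (hs μs : Fin k → ℝ) (hs' μs' : Fin l → ℝ) (h : ℝ),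
      (∀ i, hs i ∈ HpSet p ∧ 0 < hs i ∧ 0 < μs i) →
      (∀ j, hs' j ∈ HpSet p ∧ 0 < hs' j ∧ 0 < μs' j) →
      (∑ i, μs i) - (∑ j, μs' j) = 0 →
      h ∈ HpSet p → ((p : ℝ) - 1) * h = (∑ i, hs i) - (∑ j, hs' j) →
      (ContinuousOn
          (fun lam => (∑ i, ThetaF p (hs i) (μs i) lam)
            - (∑ j, ThetaF p (hs' j) (μs' j) lam) - h * lam) (Set.Ioi 0) ∧
        PiecewiseAffineWith (HpSet p)
          (fun lam => (∑ i, ThetaF p (hs i) (μs i) lam)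
            - (∑ j, ThetaF p (hs' j) (μs' j) lam) - h * lam) ∧
        (∀ lam : ℝ, 0 < lam →
          (∑ i, ThetaF p (hs i) (μs i) (p * lam))
            - (∑ j, ThetaF p (hs' j) (μs' j) (p * lam)) - h * (p * lam)
          = (∑ i, ThetaF p (hs i) (μs i) lam)
            - (∑ j, ThetaF p (hs' j) (μs' j) lam) - h * lam) ∧
        (∀ lam : ℝ, 0 < lam →
          HasOrdAt
            (fun lam => (∑ i, ThetaF p (hs i) (μs i) lam)
              - (∑ j, ThetaF p (hs' j) (μs' j) lam) - h * lam)
            lam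
            ((∑ i ∈ Finset.univ.filter
                (fun i => ∃ kk : ℤ, lam = (p : ℝ) ^ kk * (μs i / hs i)), μs i)
             - (∑ j ∈ Finset.univ.filter
                (fun j => ∃ kk : ℤ, lam = (p : ℝ) ^ kk * (μs' j / hs' j)), μs' j))))) := by
  have hp1 : 1 < (p : ℝ) := by exact_mod_cast hp.one_lt
  refine ⟨fun h _ hh μ hμ lam hlam => ThetaF_mul hp1 hh hμ hlam, ?_⟩
  intro k l hs μs hs' μs' h hfam hfam' hμ hhS hh
  have hpos i := (hfam i).2
  have hpos' j := (hfam' j).2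
  have hord lam (hlam : 0 < lam) := thetaCombination_hasOrdAt (h := h) hp1 hpos hpos' hlam
  exact ⟨fun lam hlam => (hord lam hlam).continuousAt.continuousWithinAt,
    thetaCombination_piecewiseAffineWith hp1 hfam hfam' hhS,
    fun lam hlam => thetaCombination_mul hp1 hpos hpos' hμ hh hlam, hord⟩
end
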